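/- For m ≥ 1 and n ≥ 1, Σ_{T} Π_{v∈I(T)} (m + 1/h_v) = (m+1)^n (mn+1)^{n−1} / n!, where the sum is over all complete (m+1)-ary trees T with n internal vertices. -/

import Mathlib

open Polynomial

inductive PlaneTree : Type where
  | node : List PlaneTree → PlaneTree

namespace PlaneTree

/-- total number of vertices -/
def numVertices : PlaneTree → ℕ
  | node ts => 1 + (ts.attach.map (fun t => numVertices t.1)).sum
decreasing_by simp only [PlaneTree.node.sizeOf_spec]; exact Nat.lt_add_left 1 (List.sizeOf_lt_of_mem t.2)

/-- number of internal vertices (vertices with at least one child) -/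
def numInternal : PlaneTree → ℕ
  | node ts => (if ts.isEmpty then 0 else 1) + (ts.attach.map (fun t => numInternal t.1)).sum
decreasing_by simp only [PlaneTree.node.sizeOf_spec]; exact Nat.lt_add_left 1 (List.sizeOf_lt_of_mem t.2)

/-- product of `g h_v` over all internal vertices `v`, where `h_v` is the number of
internal vertices of the subtree rooted at `v` -/
def internalHookProd {α : Type} [CommMonoid α] (g : ℕ → α) : PlaneTree → α
  | node ts =>
    (if ts.isEmpty then 1 else g (numInternal (node ts))) *
      (ts.attach.map (fun t => internalHookProd g t.1)).prod
decreasing_by simp only [PlaneTree.node.sizeOf_spec]; exact Nat.lt_add_left 1 (List.sizeOf_lt_of_mem t.2)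

/-- product of `g h_v` over all vertices `v`, where `h_v` is the number of
vertices of the subtree rooted at `v` -/
def vertexHookProd {α : Type} [CommMonoid α] (g : ℕ → α) : PlaneTree → α
  | node ts =>
    g (numVertices (node ts)) * (ts.attach.map (fun t => vertexHookProd g t.1)).prod
decreasing_by simp only [PlaneTree.node.sizeOf_spec]; exact Nat.lt_add_left 1 (List.sizeOf_lt_of_mem t.2)

/-- every internal vertex has exactly `a` children -/
def IsFullAry (a : ℕ) : PlaneTree → Prop
  | node ts => (ts.length = 0 ∨ ts.length = a) ∧ ∀ t ∈ ts, IsFullAry a t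

/-- `IsKMAry k m b T`: with the root of `T` viewed as being on a level of parity `b`
(`b = false` meaning even), every vertex on an even level has `k` children and
every vertex on an odd level has `m` or `0` children. -/
def IsKMAry (k m : ℕ) : Bool → PlaneTree → Prop
  | b, node ts =>
    (if b then ts.length = m ∨ ts.length = 0 else ts.length = k) ∧
      ∀ t ∈ ts, IsKMAry k m (!b) t

/-- number of vertices on levels of parity `b`, the root having parity `cur` -/
def parityVertices (b cur : Bool) : PlaneTree → ℕ
  | node ts =>
    (if cur = b then 1 else 0) + (ts.attach.map (fun t => parityVertices b (!cur) t.1)).sum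
termination_by T => sizeOf T
decreasing_by simp only [PlaneTree.node.sizeOf_spec]; exact Nat.lt_add_left 1 (List.sizeOf_lt_of_mem t.2)

/-- number of internal vertices on levels of parity `b`, the root having parity `cur` -/
def parityInternal (b cur : Bool) : PlaneTree → ℕ
  | node ts =>
    (if cur = b ∧ ¬ts.isEmpty then 1 else 0) +
      (ts.attach.map (fun t => parityInternal b (!cur) t.1)).sum
termination_by T => sizeOf T
decreasing_by simp only [PlaneTree.node.sizeOf_spec]; exact Nat.lt_add_left 1 (List.sizeOf_lt_of_mem t.2)

/-- the order of a `(k,m)`-ary tree: the number of internal (crucial) vertices on odd levels -/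
def kmOrder (T : PlaneTree) : ℕ := parityInternal true false T

end PlaneTree

/-!
Let `W a n` be the hook-weighted sum over ordered forests of `a` complete `(m+1)`-ary trees with
`n` internal vertices in total. Splitting off the first tree gives
`W (a + 1) n = ∑_{i+j=n} W 1 i * W a j`, and removing the root of a tree with `n + 1` internal
vertices gives `W 1 (n + 1) = (m + 1/(n+1)) * W (m + 1) n`. Both recursions, together with
`W 0 n = [n = 0]`, are satisfied by `(m+1)^n A_n(a)`, where `A_n(x) = x (x + m n)^(n-1) / n!`
are the normalized Abel polynomials. The first recursion is their binomial-type identity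
`A_n(x + y) = ∑_{i+j=n} A_i(x) A_j(y)`, which follows by induction on `n` since both sides have
derivative `A_{n-1}(x + y + m)` in `x` and agree at `x = 0`; the second is an identity between
the explicit formulas.
-/

open Finset

section AbelPolynomials

variable {K : Type*} [Field K]

noncomputable def abelPoly (c : K) : ℕ → K[X]
  | 0 => 1
  | n + 1 => C ((n + 1).factorial : K)⁻¹ * X * (X + C (c * (n + 1))) ^ n

theorem eval_abelPoly_succ (c x : K) (n : ℕ) :
    (abelPoly c (n + 1)).eval x = x * (x + c * (n + 1)) ^ n / (n + 1).factorial := by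
  simp [abelPoly, div_eq_inv_mul, mul_assoc]

theorem derivative_abelPoly_succ [CharZero K] (c : K) (n : ℕ) :
    derivative (abelPoly c (n + 1)) = (abelPoly c n).comp (X + C c) := by
  rcases n with _ | n
  · simp [abelPoly]
  have hfac : ((n + 1 + 1).factorial : K)⁻¹ * ((n + 1 + 1 : ℕ) : K) =
      ((n + 1).factorial : K)⁻¹ := by
    rw [Nat.factorial_succ (n + 1), Nat.cast_mul, mul_inv, mul_right_comm,
      inv_mul_cancel₀ (Nat.cast_ne_zero.mpr (n + 1).succ_ne_zero), one_mul]
  simp only [abelPoly, derivative_mul, derivative_C, derivative_X, derivative_pow,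
    derivative_add, zero_mul, zero_add, add_zero, mul_one, mul_comp, C_comp, X_comp, pow_comp,
    add_comp]
  rw [← hfac]
  simp only [map_mul, map_add, map_one, map_natCast]
  push_cast
  ring

theorem eq_of_derivative_eq_of_eval_zero_eq [CharZero K] {p q : K[X]}
    (hd : derivative p = derivative q) (h0 : p.eval 0 = q.eval 0) : p = q := by
  have hc := eq_C_of_derivative_eq_zero (p := p - q) (by rw [derivative_sub, hd, sub_self])
  rwa [coeff_zero_eq_eval_zero, eval_sub, h0, sub_self, map_zero, sub_eq_zero] at hc

theorem abelPoly_comp_X_add_C [CharZero K] (c y : K) (n : ℕ) :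
    (abelPoly c n).comp (X + C y) =
      ∑ p ∈ antidiagonal n, abelPoly c p.1 * C ((abelPoly c p.2).eval y) := by
  induction n with
  | zero => simp [abelPoly]
  | succ n ih =>
    apply eq_of_derivative_eq_of_eval_zero_eq
    · have hcomp : ∀ p ∈ antidiagonal n, (abelPoly c p.1).comp (X + C c) *
          C ((abelPoly c p.2).eval y) =
            (abelPoly c p.1 * C ((abelPoly c p.2).eval y)).comp (X + C c) :=
        fun p _ => by rw [mul_comp, C_comp]
      rw [derivative_comp, derivative_sum, Nat.sum_antidiagonal_succ]
      simp only [derivative_mul, derivative_C, mul_zero, add_zero, derivative_abelPoly_succ]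
      rw [abelPoly, derivative_one, zero_mul, zero_add, sum_congr rfl hcomp,
        ← Polynomial.sum_comp, ← ih, comp_assoc, comp_assoc]
      simp [add_right_comm]
    · rw [eval_finsetSum, Nat.sum_antidiagonal_succ]
      simp [abelPoly]

theorem eval_abelPoly_add [CharZero K] (c x y : K) (n : ℕ) :
    (abelPoly c n).eval (x + y) =
      ∑ p ∈ antidiagonal n, (abelPoly c p.1).eval x * (abelPoly c p.2).eval y := by
  simpa [eval_finsetSum] using congrArg (eval x) (abelPoly_comp_X_add_C c y n)

theorem succ_mul_eval_abelPoly_succ [CharZero K] (c x : K) (n : ℕ) :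
    (n + 1) * (x + c) * (abelPoly c (n + 1)).eval x =
      x * (x + c * (n + 1)) * (abelPoly c n).eval (x + c) := by
  rcases n with _ | n
  · simp [abelPoly]; ring
  rw [eval_abelPoly_succ, eval_abelPoly_succ, Nat.factorial_succ (n + 1)]
  have : ((n + 1).factorial : K) ≠ 0 := Nat.cast_ne_zero.mpr (Nat.factorial_ne_zero _)
  have : ((n + 1 + 1 : ℕ) : K) ≠ 0 := Nat.cast_ne_zero.mpr (Nat.succ_ne_zero _)
  push_cast at *
  field_simp
  ring

end AbelPolynomials

noncomputable def forestWeight (m : ℕ) (a : ℚ) (n : ℕ) : ℚ :=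
  (m + 1) ^ n * (abelPoly (m : ℚ) n).eval a

theorem forestWeight_zero_left (m n : ℕ) : forestWeight m 0 n = if n = 0 then 1 else 0 := by
  cases n <;> simp [forestWeight, abelPoly]

theorem forestWeight_add (m : ℕ) (a b : ℚ) (n : ℕ) :
    forestWeight m (a + b) n =
      ∑ q ∈ antidiagonal n, forestWeight m a q.1 * forestWeight m b q.2 := by
  rw [forestWeight, eval_abelPoly_add, mul_sum]
  refine sum_congr rfl fun q hq => ?_
  rw [← HasAntidiagonal.mem_antidiagonal.1 hq, forestWeight, forestWeight, pow_add]
  ring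

theorem forestWeight_one (m n : ℕ) :
    forestWeight m 1 n = (m + 1 : ℚ) ^ n * ((m * n + 1 : ℕ) : ℚ) ^ (n - 1) / n.factorial := by
  rcases n with _ | n
  · simp [forestWeight, abelPoly]
  · simp [forestWeight, abelPoly]
    ring

theorem hook_mul_forestWeight (m n : ℕ) :
    ((m : ℚ) + 1 / (n + 1 : ℕ)) * forestWeight m (m + 1 : ℕ) n = forestWeight m 1 (n + 1) := by
  have key := succ_mul_eval_abelPoly_succ (m : ℚ) 1 n
  have : ((n + 1 : ℕ) : ℚ) ≠ 0 := Nat.cast_ne_zero.mpr n.succ_ne_zero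
  rw [add_comm (1 : ℚ)] at key
  rw [forestWeight, forestWeight]
  push_cast at *
  field_simp
  linear_combination (-(m + 1 : ℚ) ^ n) * key

namespace PlaneTree

theorem node_injective : Function.Injective node := fun _ _ h => node.inj h

theorem numInternal_node (ts : List PlaneTree) :
    numInternal (node ts) = (if ts.isEmpty then 0 else 1) + (ts.map numInternal).sum := by
  rw [numInternal, List.attach_map_val]

theorem internalHookProd_node {α : Type} [CommMonoid α] (g : ℕ → α) (ts : List PlaneTree) :
    internalHookProd g (node ts) =
      (if ts.isEmpty then 1 else g (numInternal (node ts))) *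
        (ts.map (internalHookProd g)).prod := by
  rw [internalHookProd, List.attach_map_val]

theorem isFullAry_node (A : ℕ) (ts : List PlaneTree) :
    IsFullAry A (node ts) ↔ (ts.length = 0 ∨ ts.length = A) ∧ ∀ t ∈ ts, IsFullAry A t := by
  rw [IsFullAry]

open scoped Classical in
noncomputable def forests (F : ℕ → Finset PlaneTree) : ℕ → ℕ → Finset (List PlaneTree)
  | 0, n => if n = 0 then {[]} else ∅
  | a + 1, n => (antidiagonal n).biUnion fun p =>
      (F p.1 ×ˢ forests F a p.2).image fun q => q.1 :: q.2

theorem mem_forests {F : ℕ → Finset PlaneTree} {p : PlaneTree → Prop}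
    (hF : ∀ k t, t ∈ F k ↔ p t ∧ numInternal t = k) (a n : ℕ) (l : List PlaneTree) :
    l ∈ forests F a n ↔ l.length = a ∧ (∀ t ∈ l, p t) ∧ (l.map numInternal).sum = n := by
  induction a generalizing n l with
  | zero =>
    simp only [forests]
    split_ifs with hn <;> cases l <;> simp [hn]
    omega
  | succ a ih =>
    rcases l with _ | ⟨t, l⟩
    · simp [forests]
    · simp only [forests, mem_biUnion, mem_image, mem_product, Prod.exists, List.cons.injEq,
        HasAntidiagonal.mem_antidiagonal, hF, ih,
        List.length_cons, List.forall_mem_cons, List.map_cons, List.sum_cons]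
      constructor
      · rintro ⟨i, j, rfl, _, _, ⟨⟨hp, rfl⟩, rfl, hl, rfl⟩, rfl, rfl⟩
        exact ⟨rfl, ⟨hp, hl⟩, rfl⟩
      · rintro ⟨hlen, ⟨hp, hl⟩, rfl⟩
        exact ⟨_, _, rfl, t, l, ⟨⟨hp, rfl⟩, by omega, hl, rfl⟩, rfl, rfl⟩

open scoped Classical in
theorem sum_forests_succ {R : Type*} [CommSemiring R] {F : ℕ → Finset PlaneTree}
    (hF : ∀ k, ∀ t ∈ F k, numInternal t = k) (g : PlaneTree → R) (a n : ℕ) :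
    ∑ l ∈ forests F (a + 1) n, (l.map g).prod =
      ∑ q ∈ antidiagonal n, (∑ t ∈ F q.1, g t) * ∑ l ∈ forests F a q.2, (l.map g).prod := by
  have hdisj : (antidiagonal n : Set (ℕ × ℕ)).PairwiseDisjoint fun q =>
      (F q.1 ×ˢ forests F a q.2).image fun x => x.1 :: x.2 := by
    intro q hq q' hq' hne
    refine Finset.disjoint_left.2 fun l hl hl' => hne ?_
    simp only [mem_image, mem_product] at hl hl'
    obtain ⟨⟨t, l₁⟩, ⟨ht, -⟩, rfl⟩ := hl
    obtain ⟨⟨t', l₂⟩, ⟨ht', -⟩, he⟩ := hl'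
    obtain ⟨rfl, -⟩ := List.cons.inj he
    have h1 : q.1 = q'.1 := (hF _ _ ht).symm.trans (hF _ _ ht')
    rw [mem_coe, HasAntidiagonal.mem_antidiagonal] at hq hq'
    exact Prod.ext h1 (by omega)
  rw [forests, sum_biUnion hdisj]
  refine sum_congr rfl fun q _ => ?_
  rw [sum_image fun x _ y _ h => Prod.ext (List.cons.inj h).1 (List.cons.inj h).2, sum_product,
    sum_mul_sum]
  simp only [List.map_cons, List.prod_cons]

theorem sum_forests_prod_eq_forestWeight {F : ℕ → Finset PlaneTree} {g : PlaneTree → ℚ}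
    {m n : ℕ} (hF : ∀ k, ∀ t ∈ F k, numInternal t = k)
    (hg : ∀ k ≤ n, ∑ t ∈ F k, g t = forestWeight m 1 k) (a : ℕ) :
    ∑ l ∈ forests F a n, (l.map g).prod = forestWeight m a n := by
  induction a generalizing n with
  | zero =>
    rw [Nat.cast_zero, forestWeight_zero_left, forests]
    split_ifs <;> simp
  | succ a ih =>
    rw [sum_forests_succ hF, Nat.cast_succ, add_comm, forestWeight_add]
    refine sum_congr rfl fun q hq => ?_
    have hq := HasAntidiagonal.mem_antidiagonal.1 hq
    rw [hg q.1 (by omega), ih fun k hk => hg k (by omega)]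

noncomputable def fullTrees (A : ℕ) : ℕ → Finset PlaneTree
  | 0 => {node []}
  -- The truncation only makes the recursion visibly well founded: no tree of a forest with `n`
  -- internal vertices has more than `n` of them.
  | n + 1 => (forests (fun k => if k ≤ n then fullTrees A k else ∅) A n).map
      ⟨node, node_injective⟩

theorem fullTrees_succ (A n : ℕ) : fullTrees A (n + 1) =
    (forests (fun k => if k ≤ n then fullTrees A k else ∅) A n).map ⟨node, node_injective⟩ := by
  rw [fullTrees]

theorem mem_fullTrees {A : ℕ} (hA : A ≠ 0) (n : ℕ) (T : PlaneTree) :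
    T ∈ fullTrees A n ↔ IsFullAry A T ∧ numInternal T = n := by
  induction n using Nat.strong_induction_on generalizing T with
  | _ n ih =>
  obtain ⟨ts⟩ := T
  rcases n with _ | n
  · rcases ts with _ | ⟨t, ts⟩ <;> simp [fullTrees, isFullAry_node, numInternal_node]
  have hF : ∀ k t, t ∈ (if k ≤ n then fullTrees A k else ∅) ↔
      (IsFullAry A t ∧ numInternal t ≤ n) ∧ numInternal t = k := by
    intro k t
    split_ifs with hk
    · rw [ih k (by omega)]; grind
    · simp only [notMem_empty, false_iff]; omega
  rw [fullTrees_succ, mem_map]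
  simp only [Function.Embedding.coeFn_mk, node.injEq, exists_eq_right, mem_forests hF,
    isFullAry_node, numInternal_node]
  rcases ts with _ | ⟨t, ts⟩
  · simp [Ne.symm hA]
  simp only [List.isEmpty_cons, Bool.false_eq_true, if_false, List.length_cons,
    Nat.add_one_ne_zero, false_or]
  constructor
  · rintro ⟨hlen, hts, hsum⟩
    exact ⟨⟨hlen, fun u hu => (hts u hu).1⟩, by omega⟩
  · rintro ⟨⟨hlen, hfull⟩, hsum⟩
    refine ⟨hlen, fun u hu => ⟨hfull u hu, ?_⟩, by omega⟩
    exact (List.le_sum_of_mem (List.mem_map_of_mem hu)).trans (by omega)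

theorem sum_fullTrees_internalHookProd (m n : ℕ) :
    ∑ T ∈ fullTrees (m + 1) n, internalHookProd (fun h => (m : ℚ) + 1 / h) T =
      forestWeight m 1 n := by
  induction n using Nat.strong_induction_on with
  | _ n ih =>
  rcases n with _ | n
  · simp [fullTrees, internalHookProd_node, forestWeight, abelPoly]
  set F : ℕ → Finset PlaneTree := fun k => if k ≤ n then fullTrees (m + 1) k else ∅
  have hF : ∀ k, ∀ t ∈ F k, numInternal t = k := by
    intro k t ht
    simp only [F] at ht
    split_ifs at ht
    · exact ((mem_fullTrees m.succ_ne_zero k t).1 ht).2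
    · simp at ht
  have hnode : ∀ l ∈ forests F (m + 1) n, internalHookProd (fun h => (m : ℚ) + 1 / h) (node l) =
      ((m : ℚ) + 1 / (n + 1 : ℕ)) * (l.map (internalHookProd fun h => (m : ℚ) + 1 / h)).prod := by
    intro l hl
    have hmem : node l ∈ fullTrees (m + 1) (n + 1) := by
      rw [fullTrees_succ]
      exact mem_map_of_mem _ hl
    have hint := ((mem_fullTrees m.succ_ne_zero _ _).1 hmem).2
    have hne : ¬ l.isEmpty := by
      intro h
      simp [List.isEmpty_iff.1 h, numInternal_node] at hint
    rw [internalHookProd_node, if_neg hne, hint]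
  rw [fullTrees_succ, sum_map]
  simp only [Function.Embedding.coeFn_mk]
  rw [sum_congr rfl hnode, ← mul_sum, sum_forests_prod_eq_forestWeight (m := m) hF,
    hook_mul_forestWeight]
  intro k hk
  simp only [F, if_pos hk]
  exact ih k (by omega)

end PlaneTree

theorem hook_m_plus_reciprocal_sum_general (m n : ℕ) :
    (∑ᶠ T : {T : PlaneTree // PlaneTree.IsFullAry (m + 1) T ∧ PlaneTree.numInternal T = n},
        PlaneTree.internalHookProd (fun h => (m : ℚ) + 1 / (h : ℚ)) T.1)
      = ((m + 1 : ℚ) ^ n * ((m * n + 1 : ℕ) : ℚ) ^ (n - 1)) / n.factorial := by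
  rw [finsum_subtype_eq_finsum_cond]
  simp_rw [← PlaneTree.mem_fullTrees m.succ_ne_zero, ← Finset.mem_coe]
  rw [finsum_mem_coe_finset, PlaneTree.sum_fullTrees_internalHookProd, forestWeight_one]

/-- `Σ_T Π_{v∈I(T)} (m + 1/h_v) = (m+1)ⁿ(mn+1)ⁿ⁻¹/n!`, summed over all complete
`(m+1)`-ary trees `T` with `n` internal vertices. -/
theorem hook_m_plus_reciprocal_sum (m n : ℕ) (hm : 1 ≤ m) (hn : 1 ≤ n) :
    (∑ᶠ T : {T : PlaneTree // PlaneTree.IsFullAry (m + 1) T ∧ PlaneTree.numInternal T = n},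
        PlaneTree.internalHookProd (fun h => (m : ℚ) + 1 / (h : ℚ)) T.1)
      = ((m + 1 : ℚ) ^ n * ((m * n + 1 : ℕ) : ℚ) ^ (n - 1)) / n.factorial :=
  hook_m_plus_reciprocal_sum_general m n
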